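/- arXiv:1611.08027 — 2 statements merged into one kernel-verified Lean document; each statement's English description precedes it below -/
import Mathlib

section
/- Let 1 < p < 3 and set q = (p−3)/2 and q′ = (5−3p)/6 (so q + q′ = −2/3). Let μ,ν>0 with Sc=ν/μ, let ε>0, set κ'_β=(ε/(νμ²))^{1/4}, and fix constants c0 ≥ 1 and c1,c2>0. Let t be a tracer spectrum (3D framework) with shell sums 𝐭 and dissipation rate χ, and let wavenumbers satisfy κ0 ≤ κg ≤ c0·κ0 and 4κg ≤ κ_ε. Assume that for every κ∈[κg,κ_ε], c1·χ·ε^{-1/3}·κ0^{q′}·κ^{q} ≤ 𝐭_{κ,2κ} ≤ c2·χ·ε^{-1/3}·κ0^{q′}·κ^{q}. Then there exist constants c,C>0 depending only on p, c0, c1, c2 such that c·χ·ε^{-1/3}·κ0^{-2/3} ≤ 𝐭_{κg,κ_ε} ≤ C·χ·ε^{-1/3}·κ0^{-2/3}; equivalently, c·(χ/μ)·(κ'_β)^{-4/3}·Sc^{-1/3}·κ0^{-2/3} ≤ 𝐭_{κg,κ_ε} ≤ C·(χ/μ)·(κ'_β)^{-4/3}·Sc^{-1/3}·κ0^{-2/3}.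 (The Observation in Section 6: the estimate for κ_θ is insensitive to the decay rate p of a dimensionally correct 3D energy spectrum ε^{2/3}κ0^{p−5/3}κ^{-p}.) -/
/-!
The lower bound is the first dyadic shell `[κg, 2κg)` alone, with `κg ≤ c0 κ0`. For the upper
bound, `q = (p - 3) / 2 < 0` makes the dyadic shell bounds decay geometrically with ratio `2 ^ q`,
so `[κg, κε)` carries at most `(1 - 2 ^ q)⁻¹` times the bound of its first shell, and `κ0 ≤ κg`
turns `κg ^ q` into `κ0 ^ q`. The decay rate `p` then drops out because `q + q' = -2/3`.
-/

open Real Set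

/-- Euclidean norm of a lattice vector `k ∈ ℤ^d`. -/
noncomputable def knorm {d : ℕ} (k : Fin d → ℤ) : ℝ :=
  Real.sqrt (∑ i, ((k i : ℝ)) ^ 2)

/-- Shell sum `𝐭_{κ1,κ2}` (finite upper end). -/
noncomputable def shellSum (d : ℕ) (L κ0 : ℝ) (t : (Fin d → ℤ) → ℝ) (κ1 κ2 : ℝ) : ℝ :=
  L ^ (-(d : ℤ)) * ∑' k : Fin d → ℤ,
    (if κ1 ≤ κ0 * knorm k ∧ κ0 * knorm k < κ2 then t k else 0)

/-- Shell sum `𝐭_{κ1,∞}`. -/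
noncomputable def shellSumTop (d : ℕ) (L κ0 : ℝ) (t : (Fin d → ℤ) → ℝ) (κ1 : ℝ) : ℝ :=
  L ^ (-(d : ℤ)) * ∑' k : Fin d → ℤ, (if κ1 ≤ κ0 * knorm k then t k else 0)

/-- Tracer dissipation rate `χ = μ L^{-d} κ0² Σ_k |k|² t(k)`. -/
noncomputable def chiRate (d : ℕ) (L κ0 μ : ℝ) (t : (Fin d → ℤ) → ℝ) : ℝ :=
  μ * L ^ (-(d : ℤ)) * κ0 ^ 2 * ∑' k : Fin d → ℤ, knorm k ^ 2 * t k

/-- Indicator wavenumber squared, `κ_θ² = κ0² Σ|k|²t(k) / Σ t(k)`. -/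
noncomputable def kThetaSq (d : ℕ) (κ0 : ℝ) (t : (Fin d → ℤ) → ℝ) : ℝ :=
  κ0 ^ 2 * (∑' k : Fin d → ℤ, knorm k ^ 2 * t k) / (∑' k : Fin d → ℤ, t k)

/-- A (discrete) tracer spectrum: nonnegative, vanishing at `k = 0`, not identically
zero, and with `Σ (1+|k|²) t(k) < ∞`. -/
structure IsTracerSpectrum (d : ℕ) (t : (Fin d → ℤ) → ℝ) : Prop where
  nonneg : ∀ k, 0 ≤ t k
  map_zero : t 0 = 0
  exists_ne_zero : ∃ k, t k ≠ 0
  summable : Summable fun k : Fin d → ℤ => (1 + knorm k ^ 2) * t k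

section ShellSum

variable {d : ℕ} {L κ0 : ℝ} {t : (Fin d → ℤ) → ℝ}

lemma IsTracerSpectrum.summable_self (ht : IsTracerSpectrum d t) : Summable t :=
  ht.summable.of_nonneg_of_le ht.nonneg fun k => by
    nlinarith [ht.nonneg k, sq_nonneg (knorm k)]

lemma chiRate_nonneg {μ : ℝ} (hL : 0 ≤ L) (hμ : 0 ≤ μ) (ht : 0 ≤ t) :
    0 ≤ chiRate d L κ0 μ t := by
  unfold chiRate
  exact mul_nonneg (by positivity) (tsum_nonneg fun k => mul_nonneg (sq_nonneg _) (ht k))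

lemma shellSum_eq_tsum_indicator (a b : ℝ) :
    shellSum d L κ0 t a b =
      L ^ (-(d : ℤ)) * ∑' k, ((fun k => κ0 * knorm k) ⁻¹' Ico a b).indicator t k := by
  simp only [shellSum, indicator, mem_preimage, mem_Ico]

lemma shellSum_of_le {a b : ℝ} (hba : b ≤ a) : shellSum d L κ0 t a b = 0 := by
  simp [shellSum_eq_tsum_indicator, Ico_eq_empty_of_le hba]

variable (hL : 0 ≤ L) (ht : 0 ≤ t) (hs : Summable t)
include hL ht hs

lemma shellSum_mono {a a' b b' : ℝ} (ha : a' ≤ a) (hb : b ≤ b') :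
    shellSum d L κ0 t a b ≤ shellSum d L κ0 t a' b' := by
  simp only [shellSum_eq_tsum_indicator]
  refine mul_le_mul_of_nonneg_left ?_ (zpow_nonneg hL _)
  exact (hs.indicator _).tsum_le_tsum
    (indicator_le_indicator_of_subset (fun k hk => Ico_subset_Ico ha hb hk) ht)
    (hs.indicator _)

lemma shellSum_le_add (a b c : ℝ) :
    shellSum d L κ0 t a c ≤ shellSum d L κ0 t a b + shellSum d L κ0 t b c := by
  simp only [shellSum_eq_tsum_indicator]
  rw [← mul_add, ← (hs.indicator _).tsum_add (hs.indicator _)]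
  refine mul_le_mul_of_nonneg_left ?_ (zpow_nonneg hL _)
  rw [← indicator_union_of_disjoint (Ico_disjoint_Ico_same.preimage _), ← preimage_union]
  exact (hs.indicator _).tsum_le_tsum
    (indicator_le_indicator_of_subset (fun k hk => Ico_subset_Ico_union_Ico hk) ht)
    (hs.indicator _)

lemma shellSum_le_of_dyadic_le {a b A q : ℝ} (ha : 0 < a) (hA : 0 ≤ A) (hq : q < 0)
    (hdyadic : ∀ κ, a ≤ κ → κ ≤ b → shellSum d L κ0 t κ (2 * κ) ≤ A * κ ^ q) :
    shellSum d L κ0 t a b ≤ A / (1 - 2 ^ q) * a ^ q := by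
  set r : ℝ := 2 ^ q
  have hr : 0 < 1 - r := sub_pos.2 (rpow_lt_one_of_one_lt_of_neg one_lt_two hq)
  have hC : 0 ≤ A / (1 - r) := div_nonneg hA hr.le
  suffices h : ∀ N : ℕ, ∀ κ, a ≤ κ → b ≤ 2 ^ N * κ →
      shellSum d L κ0 t κ b ≤ A / (1 - r) * κ ^ q by
    obtain ⟨N, hN⟩ := pow_unbounded_of_one_lt (b / a) one_lt_two
    exact h N a le_rfl ((div_lt_iff₀ ha).1 hN).le
  intro N
  induction N with
  | zero =>
    intro κ hκ hb
    rw [shellSum_of_le (by simpa using hb)]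
    exact mul_nonneg hC (rpow_nonneg (ha.le.trans hκ) _)
  | succ N ih =>
    intro κ hκ hb
    have hκ0 : 0 < κ := ha.trans_le hκ
    rcases le_or_gt b κ with hbκ | hκb
    · rw [shellSum_of_le hbκ]
      exact mul_nonneg hC (rpow_nonneg hκ0.le _)
    have htail : shellSum d L κ0 t (2 * κ) b ≤ A / (1 - r) * (r * κ ^ q) := by
      rw [← mul_rpow zero_le_two hκ0.le]
      exact ih (2 * κ) (by linarith) (by rw [pow_succ] at hb; linarith)
    calc shellSum d L κ0 t κ b
        ≤ shellSum d L κ0 t κ (2 * κ) + shellSum d L κ0 t (2 * κ) b :=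
          shellSum_le_add hL ht hs _ _ _
      _ ≤ A * κ ^ q + A / (1 - r) * (r * κ ^ q) := add_le_add (hdyadic κ hκ hκb.le) htail
      _ = A / (1 - r) * κ ^ q := by field_simp; ring

lemma shellSum_bounds_of_dyadic_bounds {a₁ a₂ q c₀ κg κε : ℝ} (ha₁ : 0 ≤ a₁) (ha₂ : 0 ≤ a₂)
    (hq : q < 0) (hκ0 : 0 < κ0) (hκ0g : κ0 ≤ κg) (hgc₀ : κg ≤ c₀ * κ0) (hgε : 2 * κg ≤ κε)
    (hdyadic : ∀ κ, κg ≤ κ → κ ≤ κε →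
      a₁ * κ ^ q ≤ shellSum d L κ0 t κ (2 * κ) ∧ shellSum d L κ0 t κ (2 * κ) ≤ a₂ * κ ^ q) :
    a₁ * (c₀ * κ0) ^ q ≤ shellSum d L κ0 t κg κε ∧
      shellSum d L κ0 t κg κε ≤ a₂ / (1 - 2 ^ q) * κ0 ^ q := by
  have hκg : 0 < κg := hκ0.trans_le hκ0g
  have hr : 0 < 1 - (2 : ℝ) ^ q := sub_pos.2 (rpow_lt_one_of_one_lt_of_neg one_lt_two hq)
  constructor
  · calc a₁ * (c₀ * κ0) ^ q
        ≤ a₁ * κg ^ q := mul_le_mul_of_nonneg_left (rpow_le_rpow_of_nonpos hκg hgc₀ hq.le) ha₁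
      _ ≤ shellSum d L κ0 t κg (2 * κg) := (hdyadic κg le_rfl (by linarith)).1
      _ ≤ shellSum d L κ0 t κg κε := shellSum_mono hL ht hs le_rfl hgε
  · calc shellSum d L κ0 t κg κε
        ≤ a₂ / (1 - 2 ^ q) * κg ^ q :=
          shellSum_le_of_dyadic_le hL ht hs hκg ha₂ hq fun κ hκ hκε => (hdyadic κ hκ hκε).2
      _ ≤ a₂ / (1 - 2 ^ q) * κ0 ^ q :=
          mul_le_mul_of_nonneg_left (rpow_le_rpow_of_nonpos hκ0 hκ0g hq.le)
            (div_nonneg ha₂ hr.le)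

end ShellSum

lemma diffusionWavenumber_rpow_mul_schmidt_rpow {μ ν ε : ℝ} (hμ : 0 < μ) (hν : 0 < ν)
    (hε : 0 < ε) :
    ((ε / (ν * μ ^ 2)) ^ (1 / 4 : ℝ)) ^ (-4 / 3 : ℝ) * (ν / μ) ^ (-1 / 3 : ℝ) =
      μ * ε ^ (-1 / 3 : ℝ) := by
  have hμ3inv : (μ ^ 3) ^ (-1 / 3 : ℝ) = μ⁻¹ := by
    rw [← rpow_natCast, ← rpow_mul hμ.le]
    norm_num [rpow_neg_one]
  have hμ3 : ε / (ν * μ ^ 2) * (ν / μ) = ε / μ ^ 3 := by field_simp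
  rw [← rpow_mul (by positivity), show (1 / 4 : ℝ) * (-4 / 3) = -1 / 3 by norm_num,
    ← mul_rpow (by positivity) (by positivity), hμ3, div_rpow hε.le (by positivity), hμ3inv,
    div_inv_eq_mul, mul_comm]

theorem tracer_3D_observation_general
    (p c0 c1 c2 : ℝ)
    (hp3 : p < 3)
    (hc0 : 1 ≤ c0) (hc1 : 0 < c1) (hc2 : 0 < c2) :
    ∃ c C : ℝ, 0 < c ∧ 0 < C ∧
      ∀ (L μ ν ε κg κε κ0 Sc κβ' χ q q' : ℝ) (t : (Fin 3 → ℤ) → ℝ),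
        0 < L → 0 < μ → 0 < ν → 0 < ε →
        IsTracerSpectrum 3 t →
        κ0 = 2 * π / L →
        Sc = ν / μ →
        κβ' = (ε / (ν * μ ^ 2)) ^ (1 / 4 : ℝ) →
        χ = chiRate 3 L κ0 μ t →
        q = (p - 3) / 2 →
        q' = (5 - 3 * p) / 6 →
        κ0 ≤ κg → κg ≤ c0 * κ0 → 4 * κg ≤ κε →
        (∀ κ, κg ≤ κ → κ ≤ κε →
          c1 * χ * ε ^ (-1 / 3 : ℝ) * κ0 ^ q' * κ ^ q ≤ shellSum 3 L κ0 t κ (2 * κ) ∧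
          shellSum 3 L κ0 t κ (2 * κ) ≤ c2 * χ * ε ^ (-1 / 3 : ℝ) * κ0 ^ q' * κ ^ q) →
        (c * χ * ε ^ (-1 / 3 : ℝ) * κ0 ^ (-2 / 3 : ℝ) ≤ shellSum 3 L κ0 t κg κε ∧
          shellSum 3 L κ0 t κg κε ≤ C * χ * ε ^ (-1 / 3 : ℝ) * κ0 ^ (-2 / 3 : ℝ)) ∧
        (c * (χ / μ) * κβ' ^ (-4 / 3 : ℝ) * Sc ^ (-1 / 3 : ℝ) * κ0 ^ (-2 / 3 : ℝ) ≤
            shellSum 3 L κ0 t κg κε ∧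
          shellSum 3 L κ0 t κg κε ≤
            C * (χ / μ) * κβ' ^ (-4 / 3 : ℝ) * Sc ^ (-1 / 3 : ℝ) * κ0 ^ (-2 / 3 : ℝ)) := by
  have hq : (p - 3) / 2 < 0 := by linarith
  have hr : 0 < 1 - (2 : ℝ) ^ ((p - 3) / 2) :=
    sub_pos.2 (rpow_lt_one_of_one_lt_of_neg one_lt_two hq)
  refine ⟨c1 * c0 ^ ((p - 3) / 2), c2 / (1 - 2 ^ ((p - 3) / 2)), by positivity,
    div_pos hc2 hr, ?_⟩
  rintro L μ ν ε κg κε κ0 Sc κβ' χ q q' t hL hμ hν hε ht hκ0L rfl rfl hχ_def rfl rfl hκ0g hgc0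
    hgε hshell
  have hκ0 : 0 < κ0 := by rw [hκ0L]; positivity
  have hχ : 0 ≤ χ := hχ_def ▸ chiRate_nonneg hL.le hμ.le ht.nonneg
  obtain ⟨hlow, hupp⟩ := shellSum_bounds_of_dyadic_bounds hL.le ht.nonneg ht.summable_self
    (by positivity) (by positivity) hq hκ0 hκ0g hgc0 (by linarith) hshell
  have hexp : κ0 ^ ((5 - 3 * p) / 6) * κ0 ^ ((p - 3) / 2) = κ0 ^ (-2 / 3 : ℝ) := by
    rw [← rpow_add hκ0]; ring_nf
  rw [mul_rpow (by linarith) hκ0.le] at hlow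
  have hfirst : c1 * c0 ^ ((p - 3) / 2) * χ * ε ^ (-1 / 3 : ℝ) * κ0 ^ (-2 / 3 : ℝ) ≤
        shellSum 3 L κ0 t κg κε ∧
      shellSum 3 L κ0 t κg κε ≤
        c2 / (1 - 2 ^ ((p - 3) / 2)) * χ * ε ^ (-1 / 3 : ℝ) * κ0 ^ (-2 / 3 : ℝ) := by
    refine ⟨le_of_eq_of_le ?_ hlow, hupp.trans_eq ?_⟩ <;> rw [← hexp] <;> ring
  have hsecond (y : ℝ) : y * (χ / μ) * ((ε / (ν * μ ^ 2)) ^ (1 / 4 : ℝ)) ^ (-4 / 3 : ℝ) *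
      (ν / μ) ^ (-1 / 3 : ℝ) * κ0 ^ (-2 / 3 : ℝ) = y * χ * ε ^ (-1 / 3 : ℝ) * κ0 ^ (-2 / 3 : ℝ) := by
    rw [mul_assoc (y * (χ / μ)), diffusionWavenumber_rpow_mul_schmidt_rpow hμ hν hε]
    field_simp
  exact ⟨hfirst, by rw [hsecond, hsecond]; exact hfirst⟩

/-- The Observation in Section 6: the estimate is insensitive to the decay rate `p`
of a dimensionally correct 3D energy spectrum. -/
theorem tracer_3D_observation
    (p c0 c1 c2 : ℝ)
    (hp1 : 1 < p) (hp3 : p < 3)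
    (hc0 : 1 ≤ c0) (hc1 : 0 < c1) (hc2 : 0 < c2) :
    ∃ c C : ℝ, 0 < c ∧ 0 < C ∧
      ∀ (L μ ν ε κg κε κ0 Sc κβ' χ q q' : ℝ) (t : (Fin 3 → ℤ) → ℝ),
        0 < L → 0 < μ → 0 < ν → 0 < ε →
        IsTracerSpectrum 3 t →
        κ0 = 2 * π / L →
        Sc = ν / μ →
        κβ' = (ε / (ν * μ ^ 2)) ^ (1 / 4 : ℝ) →
        χ = chiRate 3 L κ0 μ t →
        q = (p - 3) / 2 →
        q' = (5 - 3 * p) / 6 →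
        κ0 ≤ κg → κg ≤ c0 * κ0 → 4 * κg ≤ κε →
        (∀ κ, κg ≤ κ → κ ≤ κε →
          c1 * χ * ε ^ (-1 / 3 : ℝ) * κ0 ^ q' * κ ^ q ≤ shellSum 3 L κ0 t κ (2 * κ) ∧
          shellSum 3 L κ0 t κ (2 * κ) ≤ c2 * χ * ε ^ (-1 / 3 : ℝ) * κ0 ^ q' * κ ^ q) →
        (c * χ * ε ^ (-1 / 3 : ℝ) * κ0 ^ (-2 / 3 : ℝ) ≤ shellSum 3 L κ0 t κg κε ∧
          shellSum 3 L κ0 t κg κε ≤ C * χ * ε ^ (-1 / 3 : ℝ) * κ0 ^ (-2 / 3 : ℝ)) ∧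
        (c * (χ / μ) * κβ' ^ (-4 / 3 : ℝ) * Sc ^ (-1 / 3 : ℝ) * κ0 ^ (-2 / 3 : ℝ) ≤
            shellSum 3 L κ0 t κg κε ∧
          shellSum 3 L κ0 t κg κε ≤
            C * (χ / μ) * κβ' ^ (-4 / 3 : ℝ) * Sc ^ (-1 / 3 : ℝ) * κ0 ^ (-2 / 3 : ℝ)) :=
  tracer_3D_observation_general p c0 c1 c2 hp3 hc0 hc1 hc2
end

section
/- Let μ,ν>0 with Sc=ν/μ, let ε>0, set κ'_β=(ε/(νμ²))^{1/4}, and fix constants c0 ≥ 1 and c1,…,c5>0 with c4 ≤ Sc ≤ c5. Let t be a tracer spectrum (3D framework) with shell sums 𝐭, dissipation rate χ and wavenumber κ_θ, and let wavenumbers satisfy κ0 ≤ κg ≤ c0·κ0 and 4κg ≤ κ_ε. Assume: (i) for every κ∈[κg,κ_ε], c1·χ·ε^{-1/3}·κ^{-2/3} ≤ 𝐭_{κ,2κ} ≤ c2·χ·ε^{-1/3}·κ^{-2/3}; (ii) 𝐭_{κ0,∞} ≤ c3·𝐭_{κg,κ_ε}. Then there exist constants c,C>0 depending only on c0,…,c5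 such that c·(κ'_β)^{4/3}·κ0^{2/3} ≤ κ_θ² ≤ C·(κ'_β)^{4/3}·κ0^{2/3}. (The moderate-Schmidt-number 3D case of Section 6.1: κ_θ ∼ (κ'_β)^{2/3}·κ0^{1/3}.) -/
open Real

/-!
Since `t 0 = 0` and `|k| ≥ 1` elsewhere, `𝐭_{κ0,∞}` is the whole tracer variance, so
`κ_θ² = χ / (μ 𝐭_{κ0,∞})`. The shell bound at `κg` gives `𝐭_{κ0,∞} ≥ c1 χ ε^{-1/3} κg^{-2/3}`.
Conversely `𝐭_{κ0,∞} ≤ c3 𝐭_{κg,κε}`, and `[κg, κε)` is covered by the dyadic shells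
`[2^j κg, 2^{j+1} κg)` with `2^j κg ≤ κε`, whose upper bounds `c2 χ ε^{-1/3} (2^j κg)^{-2/3}` form a
geometric series; hence `𝐭_{κ0,∞} ≤ c2 c3 χ ε^{-1/3} κg^{-2/3} / (1 - 2^{-2/3})`. Therefore
`κ_θ² ≍ ε^{1/3} κg^{2/3} / μ = Sc^{1/3} (κ'_β)^{4/3} κg^{2/3}`, and `Sc ≍ 1`, `κg ≍ κ0`.
-/

lemma Summable.ite_zero {ι : Type*} {f : ι → ℝ} (hf : Summable f) (p : ι → Prop)
    [DecidablePred p] : Summable fun i => if p i then f i else 0 :=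
  (hf.indicator {i | p i}).congr fun i => by simp [Set.indicator_apply]

lemma sum_range_two_pow_mul_rpow_le {q κ : ℝ} (hq : q < 0) (hκ : 0 ≤ κ) (n : ℕ) :
    ∑ j ∈ Finset.range n, ((2 : ℝ) ^ j * κ) ^ q ≤ κ ^ q / (1 - 2 ^ q) := by
  have hr : (2 : ℝ) ^ q < 1 := Real.rpow_lt_one_of_one_lt_of_neg one_lt_two hq
  calc ∑ j ∈ Finset.range n, ((2 : ℝ) ^ j * κ) ^ q
      = (∑ j ∈ Finset.Ico 0 n, ((2 : ℝ) ^ q) ^ j) * κ ^ q := by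
        rw [← Finset.range_eq_Ico, Finset.sum_mul]
        refine Finset.sum_congr rfl fun j _ => ?_
        rw [Real.mul_rpow (by positivity) hκ, Real.rpow_pow_comm zero_le_two]
    _ ≤ (((2 : ℝ) ^ q) ^ 0 / (1 - 2 ^ q)) * κ ^ q := by
        gcongr
        exact geom_sum_Ico_le_of_lt_one (by positivity) hr
    _ = κ ^ q / (1 - 2 ^ q) := by ring

lemma one_le_knorm {d : ℕ} {k : Fin d → ℤ} (hk : k ≠ 0) : 1 ≤ knorm k := by
  obtain ⟨i, hi⟩ : ∃ i, k i ≠ 0 := by simpa [funext_iff] using hk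
  have hki : (1 : ℝ) ≤ (k i : ℝ) ^ 2 := by
    exact_mod_cast (Int.one_le_abs hi).trans (Int.le_self_sq _) |>.trans_eq (sq_abs _)
  exact Real.one_le_sqrt.2 <|
    hki.trans (Finset.single_le_sum (fun j _ => sq_nonneg ((k j : ℝ))) (Finset.mem_univ i))

namespace IsTracerSpectrum

variable {d : ℕ} {t : (Fin d → ℤ) → ℝ}

lemma summable_self_s16 (ht : IsTracerSpectrum d t) : Summable t :=
  ht.summable.of_nonneg_of_le ht.nonneg fun k =>
    le_mul_of_one_le_left (ht.nonneg k) (le_add_of_nonneg_right (sq_nonneg _))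

lemma summable_knorm_sq_mul (ht : IsTracerSpectrum d t) :
    Summable fun k => knorm k ^ 2 * t k :=
  ht.summable.of_nonneg_of_le (fun k => mul_nonneg (sq_nonneg _) (ht.nonneg k)) fun k =>
    mul_le_mul_of_nonneg_right (le_add_of_nonneg_left zero_le_one) (ht.nonneg k)

lemma tsum_knorm_sq_mul_pos (ht : IsTracerSpectrum d t) : 0 < ∑' k, knorm k ^ 2 * t k := by
  obtain ⟨k, hk⟩ := ht.exists_ne_zero
  have hk0 : k ≠ 0 := by rintro rfl; exact hk ht.map_zero
  refine ht.summable_knorm_sq_mul.tsum_pos (fun k => mul_nonneg (sq_nonneg _) (ht.nonneg k)) k ?_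
  exact mul_pos (by nlinarith [one_le_knorm hk0]) ((ht.nonneg k).lt_of_ne' hk)

lemma shellSumTop_self (ht : IsTracerSpectrum d t) {L κ0 : ℝ} (hκ0 : 0 ≤ κ0) :
    shellSumTop d L κ0 t κ0 = L ^ (-(d : ℤ)) * ∑' k, t k := by
  refine congrArg _ (tsum_congr fun k => ?_)
  rcases eq_or_ne k 0 with rfl | hk
  · simp [ht.map_zero]
  · exact if_pos (le_mul_of_one_le_right hκ0 (one_le_knorm hk))

end IsTracerSpectrum

section ShellSum

variable {d : ℕ} {L κ0 : ℝ} {t : (Fin d → ℤ) → ℝ}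

lemma shellSum_nonneg (hL : 0 < L) (ht : ∀ k, 0 ≤ t k) (a b : ℝ) :
    0 ≤ shellSum d L κ0 t a b :=
  mul_nonneg (zpow_pos hL _).le (tsum_nonneg fun k => by split_ifs <;> simp [ht k])

lemma shellSum_le_mul_tsum (hL : 0 < L) (ht : ∀ k, 0 ≤ t k) (hts : Summable t) (a b : ℝ) :
    shellSum d L κ0 t a b ≤ L ^ (-(d : ℤ)) * ∑' k, t k := by
  refine mul_le_mul_of_nonneg_left ?_ (zpow_pos hL _).le
  exact Summable.tsum_le_tsum (fun k => by split_ifs <;> simp [ht k])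
    (hts.ite_zero _) hts

lemma shellSum_add (hts : Summable t) {a b c : ℝ} (hab : a ≤ b) (hbc : b ≤ c) :
    shellSum d L κ0 t a b + shellSum d L κ0 t b c = shellSum d L κ0 t a c := by
  unfold shellSum
  rw [← mul_add, ← Summable.tsum_add (hts.ite_zero _) (hts.ite_zero _)]
  refine congrArg _ (tsum_congr fun k => ?_)
  split_ifs <;> grind

lemma shellSum_eq_sum_range (hts : Summable t) {a : ℕ → ℝ} (ha : Monotone a) (n : ℕ) :
    shellSum d L κ0 t (a 0) (a n) = ∑ j ∈ Finset.range n, shellSum d L κ0 t (a j) (a (j + 1)) := by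
  induction n with
  | zero =>
    rw [Finset.sum_range_zero, shellSum, tsum_congr fun k => if_neg fun h => (h.1.trans_lt h.2).false]
    simp
  | succ n ih =>
    rw [Finset.sum_range_succ, ← ih, shellSum_add hts (ha (Nat.zero_le n)) (ha n.le_succ)]

lemma shellSum_le_of_dyadic_le_s16 (hL : 0 < L) (ht : ∀ k, 0 ≤ t k) (hts : Summable t)
    {q B κg κε : ℝ} (hq : q < 0) (hκg : 0 < κg) (hgε : κg ≤ κε)
    (hB : ∀ κ, κg ≤ κ → κ ≤ κε → shellSum d L κ0 t κ (2 * κ) ≤ B * κ ^ q) :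
    shellSum d L κ0 t κg κε ≤ B * κg ^ q / (1 - 2 ^ q) := by
  have hB0 : 0 ≤ B := nonneg_of_mul_nonneg_left
    ((shellSum_nonneg hL ht _ _).trans (hB κg le_rfl hgε)) (Real.rpow_pos_of_pos hκg q)
  have hex : ∃ n : ℕ, κε < 2 ^ n * κg := by
    obtain ⟨n, hn⟩ := pow_unbounded_of_one_lt (κε / κg) one_lt_two
    exact ⟨n, (div_lt_iff₀ hκg).1 hn⟩
  have hmono : Monotone fun j : ℕ => (2 : ℝ) ^ j * κg := fun i j hij =>
    mul_le_mul_of_nonneg_right (pow_le_pow_right₀ one_le_two hij) hκg.le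
  -- the first dyadic index past `κε`: every earlier shell starts inside the inertial range
  set N := Nat.find hex
  have hshell : ∀ j ∈ Finset.range N,
      shellSum d L κ0 t (2 ^ j * κg) (2 ^ (j + 1) * κg) ≤ B * (2 ^ j * κg) ^ q := fun j hj => by
    rw [show (2 : ℝ) ^ (j + 1) * κg = 2 * (2 ^ j * κg) by ring]
    exact hB _ (le_mul_of_one_le_left hκg.le (one_le_pow₀ one_le_two))
      (not_lt.1 (Nat.find_min hex (Finset.mem_range.1 hj)))
  calc shellSum d L κ0 t κg κε
      ≤ shellSum d L κ0 t κg κε + shellSum d L κ0 t κε (2 ^ N * κg) :=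
        le_add_of_nonneg_right (shellSum_nonneg hL ht _ _)
    _ = shellSum d L κ0 t (2 ^ 0 * κg) (2 ^ N * κg) := by
        rw [shellSum_add hts hgε (Nat.find_spec hex).le, pow_zero, one_mul]
    _ ≤ ∑ j ∈ Finset.range N, B * (2 ^ j * κg) ^ q := by
        rw [shellSum_eq_sum_range hts hmono N]
        exact Finset.sum_le_sum hshell
    _ ≤ B * (κg ^ q / (1 - 2 ^ q)) := by
        rw [← Finset.mul_sum]
        exact mul_le_mul_of_nonneg_left (sum_range_two_pow_mul_rpow_le hq hκg.le N) hB0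
    _ = B * κg ^ q / (1 - 2 ^ q) := (mul_div_assoc _ _ _).symm

end ShellSum

lemma kThetaSq_eq_chiRate_div {d : ℕ} {L κ0 μ : ℝ} (t : (Fin d → ℤ) → ℝ) (hL : L ≠ 0)
    (hμ : μ ≠ 0) :
    kThetaSq d κ0 t = chiRate d L κ0 μ t / (μ * (L ^ (-(d : ℤ)) * ∑' k, t k)) := by
  rw [kThetaSq, chiRate,
    ← mul_div_mul_left _ (∑' k, t k) (mul_ne_zero hμ (zpow_ne_zero (-(d : ℤ)) hL))]
  ring

theorem IsTracerSpectrum.kThetaSq_bounds {d : ℕ} {t : (Fin d → ℤ) → ℝ}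
    (ht : IsTracerSpectrum d t) {L μ ε κ0 κg κε c1 c2 c3 : ℝ} (hL : 0 < L) (hμ : 0 < μ)
    (hε : 0 < ε) (hκ0 : 0 < κ0) (hκg : 0 < κg) (hgε : κg ≤ κε)
    (hc1 : 0 < c1) (hc2 : 0 < c2) (hc3 : 0 < c3)
    (hlower : c1 * chiRate d L κ0 μ t * ε ^ (-1 / 3 : ℝ) * κg ^ (-2 / 3 : ℝ) ≤
      shellSum d L κ0 t κg (2 * κg))
    (hupper : ∀ κ, κg ≤ κ → κ ≤ κε → shellSum d L κ0 t κ (2 * κ) ≤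
      c2 * chiRate d L κ0 μ t * ε ^ (-1 / 3 : ℝ) * κ ^ (-2 / 3 : ℝ))
    (htop : shellSumTop d L κ0 t κ0 ≤ c3 * shellSum d L κ0 t κg κε) :
    (1 - 2 ^ (-2 / 3 : ℝ)) / (c2 * c3) * (ε ^ (1 / 3 : ℝ) / μ * κg ^ (2 / 3 : ℝ)) ≤
        kThetaSq d κ0 t ∧
      kThetaSq d κ0 t ≤ ε ^ (1 / 3 : ℝ) / μ * κg ^ (2 / 3 : ℝ) / c1 := by
  set χ := chiRate d L κ0 μ t
  set X := L ^ (-(d : ℤ)) * ∑' k, t k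
  set K := ε ^ (1 / 3 : ℝ) / μ * κg ^ (2 / 3 : ℝ) with hK_def
  set r : ℝ := 1 - 2 ^ (-2 / 3 : ℝ)
  have hr : 0 < r := sub_pos.2 (Real.rpow_lt_one_of_one_lt_of_neg one_lt_two (by norm_num))
  have hχ : 0 < χ := by
    have := ht.tsum_knorm_sq_mul_pos
    unfold χ chiRate
    positivity
  have hK : 0 < K := by positivity
  have hscale : ε ^ (-1 / 3 : ℝ) * κg ^ (-2 / 3 : ℝ) = (μ * K)⁻¹ := by
    rw [neg_div, Real.rpow_neg hε.le, neg_div, Real.rpow_neg hκg.le, hK_def]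
    field_simp
  have hXlo : c1 * χ / (μ * K) ≤ X :=
    calc c1 * χ / (μ * K) = c1 * χ * ε ^ (-1 / 3 : ℝ) * κg ^ (-2 / 3 : ℝ) := by
          rw [mul_assoc _ (ε ^ _), hscale, div_eq_mul_inv]
      _ ≤ X := hlower.trans (shellSum_le_mul_tsum hL ht.nonneg ht.summable_self_s16 _ _)
  have hXhi : X ≤ c3 * c2 * χ / (r * μ * K) :=
    calc X = shellSumTop d L κ0 t κ0 := (ht.shellSumTop_self hκ0.le).symm
      _ ≤ c3 * (c2 * χ * ε ^ (-1 / 3 : ℝ) * κg ^ (-2 / 3 : ℝ) / r) :=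
          htop.trans <| mul_le_mul_of_nonneg_left (shellSum_le_of_dyadic_le_s16 hL ht.nonneg
            ht.summable_self_s16 (by norm_num) hκg hgε hupper) hc3.le
      _ = c3 * c2 * χ / (r * μ * K) := by
          rw [mul_assoc _ (ε ^ _), hscale]
          field_simp
  have hX : 0 < X := lt_of_lt_of_le (by positivity) hXlo
  rw [kThetaSq_eq_chiRate_div t hL.ne' hμ.ne']
  constructor
  · rw [le_div_iff₀ (by positivity)]
    calc r / (c2 * c3) * K * (μ * X) ≤ r / (c2 * c3) * K * (μ * (c3 * c2 * χ / (r * μ * K))) := by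
          gcongr
      _ = χ := by field_simp
  · rw [div_le_iff₀ (by positivity)]
    calc χ = K / c1 * (μ * (c1 * χ / (μ * K))) := by field_simp
      _ ≤ K / c1 * (μ * X) := by gcongr

lemma rpow_one_third_div_eq_schmidt_mul_diffusion_wavenumber {ε ν μ : ℝ} (hε : 0 ≤ ε)
    (hν : 0 < ν) (hμ : 0 < μ) :
    ε ^ (1 / 3 : ℝ) / μ = (ν / μ) ^ (1 / 3 : ℝ) * ((ε / (ν * μ ^ 2)) ^ (1 / 4 : ℝ)) ^ (4 / 3 : ℝ) := by
  rw [← Real.rpow_mul (by positivity), show (1 / 4 : ℝ) * (4 / 3) = 1 / 3 by norm_num,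
    ← Real.mul_rpow (by positivity) (by positivity),
    show ν / μ * (ε / (ν * μ ^ 2)) = ε / μ ^ 3 by field_simp,
    Real.div_rpow hε (by positivity), one_div,
    show (3 : ℝ) = ((3 : ℕ) : ℝ) by norm_num, Real.pow_rpow_inv_natCast hμ.le (by norm_num)]

/-- Section 6.1, moderate Schmidt number in 3D: `κ_θ ∼ (κ'_β)^{2/3} κ0^{1/3}`. -/
theorem tracer_3D_moderate_Schmidt
    (c0 c1 c2 c3 c4 c5 : ℝ)
    (hc0 : 1 ≤ c0) (hc1 : 0 < c1) (hc2 : 0 < c2) (hc3 : 0 < c3)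
    (hc4 : 0 < c4) (hc5 : 0 < c5) :
    ∃ c C : ℝ, 0 < c ∧ 0 < C ∧
      ∀ (L μ ν ε κg κε κ0 Sc κβ' χ : ℝ) (t : (Fin 3 → ℤ) → ℝ),
        0 < L → 0 < μ → 0 < ν → 0 < ε →
        IsTracerSpectrum 3 t →
        κ0 = 2 * π / L →
        Sc = ν / μ →
        c4 ≤ Sc → Sc ≤ c5 →
        κβ' = (ε / (ν * μ ^ 2)) ^ (1 / 4 : ℝ) →
        χ = chiRate 3 L κ0 μ t →
        κ0 ≤ κg → κg ≤ c0 * κ0 → 4 * κg ≤ κε →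
        (∀ κ, κg ≤ κ → κ ≤ κε →
          c1 * χ * ε ^ (-1 / 3 : ℝ) * κ ^ (-2 / 3 : ℝ) ≤ shellSum 3 L κ0 t κ (2 * κ) ∧
          shellSum 3 L κ0 t κ (2 * κ) ≤ c2 * χ * ε ^ (-1 / 3 : ℝ) * κ ^ (-2 / 3 : ℝ)) →
        shellSumTop 3 L κ0 t κ0 ≤ c3 * shellSum 3 L κ0 t κg κε →
        c * κβ' ^ (4 / 3 : ℝ) * κ0 ^ (2 / 3 : ℝ) ≤ kThetaSq 3 κ0 t ∧
          kThetaSq 3 κ0 t ≤ C * κβ' ^ (4 / 3 : ℝ) * κ0 ^ (2 / 3 : ℝ) := by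
  have hr : 0 < 1 - (2 : ℝ) ^ (-2 / 3 : ℝ) :=
    sub_pos.2 (Real.rpow_lt_one_of_one_lt_of_neg one_lt_two (by norm_num))
  refine ⟨(1 - 2 ^ (-2 / 3 : ℝ)) / (c2 * c3) * c4 ^ (1 / 3 : ℝ),
    c0 ^ (2 / 3 : ℝ) * c5 ^ (1 / 3 : ℝ) / c1, by positivity, by positivity, ?_⟩
  intro L μ ν ε κg κε κ0 Sc κβ' χ t hL hμ hν hε ht hκ0 hSc hc4Sc hScc5 hκβ' hχ hκ0g hκgc0 hκgε
    hshell htop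
  subst hSc hκβ' hχ
  have hκ0pos : 0 < κ0 := hκ0 ▸ by positivity
  have hκg : 0 < κg := hκ0pos.trans_le hκ0g
  obtain ⟨hlo, hhi⟩ := ht.kThetaSq_bounds hL hμ hε hκ0pos hκg (by linarith) hc1 hc2 hc3
    (hshell κg le_rfl (by linarith)).1 (fun κ h1 h2 => (hshell κ h1 h2).2) htop
  rw [rpow_one_third_div_eq_schmidt_mul_diffusion_wavenumber hε.le hν hμ] at hlo hhi
  have hSc_lo := Real.rpow_le_rpow hc4.le hc4Sc (by norm_num : (0 : ℝ) ≤ 1 / 3)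
  have hSc_hi := Real.rpow_le_rpow (hc4.le.trans hc4Sc) hScc5 (by norm_num : (0 : ℝ) ≤ 1 / 3)
  have hκg_lo := Real.rpow_le_rpow hκ0pos.le hκ0g (by norm_num : (0 : ℝ) ≤ 2 / 3)
  have hκg_hi : κg ^ (2 / 3 : ℝ) ≤ c0 ^ (2 / 3 : ℝ) * κ0 ^ (2 / 3 : ℝ) :=
    (Real.rpow_le_rpow hκg.le hκgc0 (by norm_num)).trans_eq (Real.mul_rpow (by linarith) hκ0pos.le)
  constructor
  · refine le_trans ?_ hlo
    calc _ = (1 - 2 ^ (-2 / 3 : ℝ)) / (c2 * c3) *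
          (c4 ^ (1 / 3 : ℝ) * ((ε / (ν * μ ^ 2)) ^ (1 / 4 : ℝ)) ^ (4 / 3 : ℝ) * κ0 ^ (2 / 3 : ℝ)) := by
          ring
      _ ≤ _ := by gcongr
  · refine hhi.trans ?_
    calc _ ≤ c5 ^ (1 / 3 : ℝ) * ((ε / (ν * μ ^ 2)) ^ (1 / 4 : ℝ)) ^ (4 / 3 : ℝ) *
          (c0 ^ (2 / 3 : ℝ) * κ0 ^ (2 / 3 : ℝ)) / c1 := by gcongr
      _ = _ := by ring
end
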